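/- Let m ≥ 3, n ≥ 1 and k ≥ 1, and write λ = 2k. The number of proper colorings of the signed book graph (B(m,n), σ_1) with color set {−k,…,−1,1,…,k} equals λ·γ_m(λ)^{n−1}·γ_{m+1}(λ). -/

import Mathlib

/-!
Fix the colours `a` of `u` and `b ≠ a` of `v`. The pages are then coloured independently, each
as a path whose end vertices must avoid `a` (or `-a` on the one negative page) and `b`. With
`q` colours, a path on `L + 1` vertices with end constraints `a`, `b` has
`γ_{L+3}(q) + (-1)^L [a = b]` colourings, by induction on `L` via
`γ_{m+2} = (q-1) γ_{m+1} + (-1)^m`.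
Since `b ≠ a`, every positive page contributes `γ_m(q)`, and summing the negative page over
`b ≠ a` gives `(q - 1) γ_m(q) + (-1)^(m-3) = γ_{m+1}(q)`, the extra term coming from `b = -a`,
which differs from `a` because `0` is not a colour.
-/

/-- Vertices of the book graph `B(m,n)`: `Sum.inl false` is `u`, `Sum.inl true` is `v`,
and `Sum.inr (i, j)` is the vertex `u_{j+1}^{i+1}`. -/
abbrev BookVertex (m n : ℕ) := Bool ⊕ (Fin n × Fin (m - 2))

/-- Adjacency relation of the book graph `B(m,n)`. -/
def bookAdj (m n : ℕ) : BookVertex m n → BookVertex m n → Prop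
  | Sum.inl a, Sum.inl b => a ≠ b
  | Sum.inl false, Sum.inr (_, j) => j.val = 0
  | Sum.inl true, Sum.inr (_, j) => j.val = m - 3
  | Sum.inr (_, j), Sum.inl false => j.val = 0
  | Sum.inr (_, j), Sum.inl true => j.val = m - 3
  | Sum.inr (i, j), Sum.inr (i', j') => i = i' ∧ (j.val + 1 = j'.val ∨ j'.val + 1 = j.val)

/-- The signature `σ_l` of `B(m,n)`: exactly the edges `u u_1^1, …, u u_1^l` are negative. -/
def sigmaL (m n l : ℕ) : BookVertex m n → BookVertex m n → ℤ
  | Sum.inl false, Sum.inr (i, j) => if j.val = 0 ∧ i.val < l then -1 else 1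
  | Sum.inr (i, j), Sum.inl false => if j.val = 0 ∧ i.val < l then -1 else 1
  | _, _ => 1

/-- The signature of `B^{uv}(m,n)`: exactly the edge `uv` is negative. -/
def sigmaUV (m n : ℕ) : BookVertex m n → BookVertex m n → ℤ
  | Sum.inl _, Sum.inl _ => -1
  | _, _ => 1

/-- `γ_m(x) = ∑_{i=0}^{m-2} (-1)^i (x-1)^{m-2-i}`. -/
def gammaP (m : ℕ) (x : ℤ) : ℤ := ∑ i ∈ Finset.range (m - 1), (-1) ^ i * (x - 1) ^ (m - 2 - i)

open Finset

lemma gammaP_add_two (m : ℕ) (x : ℤ) :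
    gammaP (m + 2) x = (x - 1) * gammaP (m + 1) x + (-1) ^ m := by
  have hterm : ∀ i ∈ range m,
      (x - 1) * ((-1) ^ i * (x - 1) ^ (m + 1 - 2 - i)) = (-1) ^ i * (x - 1) ^ (m + 2 - 2 - i) := by
    intro i hi
    rw [mem_range] at hi
    rw [show m + 2 - 2 - i = (m + 1 - 2 - i) + 1 by omega, pow_succ]
    ring
  rw [gammaP, gammaP, show m + 2 - 1 = m + 1 by omega, sum_range_succ, mul_sum,
    show m + 1 - 1 = m by omega, sum_congr rfl hterm]
  simp

lemma gammaP_three (x : ℤ) : gammaP 3 x = x - 2 := by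
  simp only [gammaP, sum_range_succ, range_one, sum_singleton]
  ring

section PathColorings

variable {α : Type*} [DecidableEq α]

/-- Colourings with colours in `S` of a path on `L + 1` vertices that are proper on the path
and on the two edges joining its ends to vertices coloured `a` and `b`. -/
def pathColorings (S : Finset α) (L : ℕ) (a b : α) : Finset (Fin (L + 1) → α) :=
  {f ∈ Fintype.piFinset fun _ => S |
    (∀ j : Fin L, f j.castSucc ≠ f j.succ) ∧ f 0 ≠ a ∧ f (Fin.last L) ≠ b}

variable {S : Finset α} {L : ℕ} {a b : α}

lemma intCast_card_erase (ha : a ∈ S) : (#(S.erase a) : ℤ) = #S - 1 := by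
  rw [← card_erase_add_one ha]
  push_cast
  ring

lemma mem_pathColorings {f : Fin (L + 1) → α} :
    f ∈ pathColorings S L a b ↔
      (∀ j, f j ∈ S) ∧ (∀ j : Fin L, f j.castSucc ≠ f j.succ) ∧ f 0 ≠ a ∧ f (Fin.last L) ≠ b := by
  simp [pathColorings]

lemma cons_mem_pathColorings_succ {x : α} {g : Fin (L + 1) → α} :
    Fin.cons x g ∈ pathColorings S (L + 1) a b ↔ x ∈ S.erase a ∧ g ∈ pathColorings S L x b := by
  simp only [mem_pathColorings, Fin.forall_fin_succ (n := L + 1), Fin.forall_fin_succ (n := L),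
    Fin.cons_zero, Fin.cons_succ, Fin.castSucc_zero, ← Fin.succ_castSucc, ← Fin.succ_last, mem_erase]
  rw [ne_comm (a := g 0)]
  tauto

lemma card_pathColorings_zero : #(pathColorings S 0 a b) = #((S.erase a).erase b) := by
  refine card_nbij' (fun f => f 0) (fun x _ => x) ?_ ?_ ?_ ?_
  · intro f
    simp +contextual [mem_pathColorings]
  · intro x
    simp +contextual [mem_pathColorings]
  · intro f _
    exact funext fun j => by rw [Fin.fin_one_eq_zero j]
  · intro x _
    rfl

lemma card_pathColorings_succ :
    #(pathColorings S (L + 1) a b) = ∑ x ∈ S.erase a, #(pathColorings S L x b) := by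
  rw [← card_sigma]
  refine card_bij' (fun f _ => ⟨f 0, Fin.tail f⟩) (fun p _ => Fin.cons p.1 p.2) ?_ ?_ ?_ ?_
  · intro f hf
    rw [← Fin.cons_self_tail f, cons_mem_pathColorings_succ] at hf
    exact mem_sigma.2 hf
  · intro p hp
    exact cons_mem_pathColorings_succ.2 (mem_sigma.1 hp)
  · intro f _
    exact Fin.cons_self_tail f
  · intro p _
    rfl

theorem card_pathColorings (ha : a ∈ S) (hb : b ∈ S) :
    (#(pathColorings S L a b) : ℤ) = gammaP (L + 3) #S + (-1) ^ L * if a = b then 1 else 0 := by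
  induction L generalizing a with
  | zero =>
    rw [card_pathColorings_zero, gammaP_three]
    rcases eq_or_ne a b with rfl | hab
    · rw [erase_idem, intCast_card_erase ha, if_pos rfl]
      ring
    · rw [intCast_card_erase (mem_erase.2 ⟨hab.symm, hb⟩), intCast_card_erase ha, if_neg hab]
      ring
  | succ L ih =>
    rw [card_pathColorings_succ, Nat.cast_sum, sum_congr rfl fun x hx => ih (mem_of_mem_erase hx),
      sum_add_distrib, ← mul_sum, sum_ite_eq', sum_const, nsmul_eq_mul, intCast_card_erase ha,
      gammaP_add_two (L + 2)]
    rcases eq_or_ne a b with rfl | hab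
    · simp only [notMem_erase, if_true, if_false]
      ring
    · simp only [mem_erase, ne_eq, hab.symm, hab, hb, not_false_eq_true, and_self, if_true, if_false]
      ring

lemma card_pathColorings_of_ne (ha : a ∈ S) (hb : b ∈ S) (hab : a ≠ b) :
    (#(pathColorings S L a b) : ℤ) = gammaP (L + 3) #S := by
  simp [card_pathColorings ha hb, hab]

lemma sum_card_pathColorings_erase (ha : a ∈ S) (hb : b ∈ S) (hab : a ≠ b) :
    ∑ x ∈ S.erase a, (#(pathColorings S L b x) : ℤ) = gammaP (L + 4) #S := by
  rw [sum_congr rfl fun x hx => card_pathColorings hb (mem_of_mem_erase hx), sum_add_distrib,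
    ← mul_sum, sum_ite_eq, if_pos (mem_erase.2 ⟨hab.symm, hb⟩), sum_const, nsmul_eq_mul,
    intCast_card_erase ha, gammaP_add_two (L + 2)]
  ring

end PathColorings

lemma Nat.card_sigma_pi {β γ ι : Type*} [Fintype ι] (s : Finset β) (F : β → ι → Finset γ) :
    Nat.card (Σ b : s, ∀ i, F b i) = ∑ b ∈ s, ∏ i, #(F b i) := by
  simp only [Nat.card_sigma, Nat.card_pi, Nat.card_eq_finsetCard]
  exact sum_coe_sort s fun b => ∏ i, #(F b i)

noncomputable def signedColors (k : ℕ) : Finset ℤ := (Icc (-(k : ℤ)) k).erase 0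

lemma mem_signedColors {k : ℕ} {x : ℤ} : x ∈ signedColors k ↔ x ≠ 0 ∧ |x| ≤ k := by
  simp [signedColors, abs_le]

lemma card_signedColors (k : ℕ) : #(signedColors k) = 2 * k := by
  rw [signedColors, card_erase_of_mem (by simp), Int.card_Icc]
  omega

section Book

variable {t n l : ℕ}

lemma Fin.forall_val_eq_zero_imp {P : Fin (t + 1) → Prop} :
    (∀ j : Fin (t + 1), j.val = 0 → P j) ↔ P 0 :=
  ⟨fun h => h 0 rfl, fun h j hj => (Fin.ext hj : j = 0) ▸ h⟩

lemma Fin.forall_val_eq_imp_last {P : Fin (t + 1) → Prop} :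
    (∀ j : Fin (t + 1), j.val = t → P j) ↔ P (Fin.last t) :=
  ⟨fun h => h _ rfl, fun h j hj => (Fin.ext hj : j = Fin.last t) ▸ h⟩

lemma forall_pages_adjacent_ne_iff {ι β : Type*} {g : ι → Fin (t + 1) → β} :
    (∀ i j i' j', i = i' ∧ (j.val + 1 = j'.val ∨ j'.val + 1 = j.val) → g i j ≠ g i' j') ↔
      ∀ i (j : Fin t), g i j.castSucc ≠ g i j.succ := by
  refine ⟨fun h i j => h _ _ _ _ ⟨rfl, Or.inl rfl⟩, ?_⟩
  rintro h i j _ j' ⟨rfl, hj | hj⟩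
  · obtain ⟨j₀, rfl, rfl⟩ : ∃ j₀ : Fin t, j₀.castSucc = j ∧ j₀.succ = j' :=
      ⟨⟨j, by omega⟩, rfl, Fin.ext hj⟩
    exact h i j₀
  · obtain ⟨j₀, rfl, rfl⟩ : ∃ j₀ : Fin t, j₀.castSucc = j' ∧ j₀.succ = j :=
      ⟨⟨j', by omega⟩, rfl, Fin.ext hj⟩
    exact (h i j₀).symm

lemma sign_mul_eq_comm {p : Prop} [Decidable p] {x y : ℤ} :
    (if p then -1 else 1) * x = y ↔ x = (if p then -1 else 1) * y := by
  split_ifs <;> omega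

lemma properBookColoring_iff (c : Bool ⊕ (Fin n × Fin (t + 1)) → ℤ) :
    (∀ x y : Bool ⊕ (Fin n × Fin (t + 1)),
        bookAdj (t + 3) n x y → c x ≠ sigmaL (t + 3) n l x y * c y) ↔
      c (.inl false) ≠ c (.inl true) ∧
        ∀ i, (∀ j : Fin t, c (.inr (i, j.castSucc)) ≠ c (.inr (i, j.succ))) ∧
          c (.inr (i, 0)) ≠ (if i.val < l then -1 else 1) * c (.inl false) ∧
          c (.inr (i, Fin.last t)) ≠ c (.inl true) := by
  simp only [Sum.forall, Prod.forall, Bool.forall_bool, bookAdj, sigmaL, Nat.add_sub_cancel,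
    Fin.forall_val_eq_zero_imp, Fin.forall_val_eq_imp_last, one_mul, Fin.val_zero,
    forall_pages_adjacent_ne_iff, forall_and, true_and, Bool.true_eq_false, Bool.false_eq_true,
    ne_eq, not_false_eq_true, not_true_eq_false, imp_self, forall_const,
    eq_comm (a := c (.inl false)), sign_mul_eq_comm]
  tauto

def bookColoringEquiv (S : Finset ℤ) :
    {c : BookVertex (t + 3) n → ℤ //
        (∀ x, c x ∈ S) ∧ ∀ x y, bookAdj (t + 3) n x y → c x ≠ sigmaL (t + 3) n l x y * c y} ≃
      Σ (a : S) (b : S.erase a), ∀ i : Fin n,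
        pathColorings S t ((if i.val < l then -1 else 1) * a) b where
  toFun c :=
    have hc := (properBookColoring_iff c.1).1 c.2.2
    ⟨⟨c.1 (.inl false), c.2.1 _⟩, ⟨c.1 (.inl true), mem_erase.2 ⟨hc.1.symm, c.2.1 _⟩⟩,
      fun i => ⟨fun j => c.1 (.inr (i, j)), mem_pathColorings.2 ⟨fun _ => c.2.1 _, hc.2 i⟩⟩⟩
  invFun p := ⟨Sum.elim (fun β => cond β p.2.1 p.1) (fun ij => (p.2.2 ij.1).1 ij.2), by
    obtain ⟨⟨a, ha⟩, ⟨b, hb⟩, f⟩ := p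
    refine ⟨?_, (properBookColoring_iff _).2
      ⟨(mem_erase.1 hb).1.symm, fun i => (mem_pathColorings.1 (f i).2).2⟩⟩
    rintro ((_ | _) | ⟨i, j⟩)
    · exact ha
    · exact mem_of_mem_erase hb
    · exact (mem_pathColorings.1 (f i).2).1 j⟩
  left_inv c := Subtype.ext <| funext fun x => by rcases x with (_ | _) | _ <;> rfl
  right_inv _ := rfl

theorem card_bookColorings_sigmaL_one (S : Finset ℤ) (h0 : 0 ∉ S) (hneg : ∀ x ∈ S, -x ∈ S) :
    (Nat.card {c : BookVertex (t + 3) (n + 1) → ℤ // (∀ x, c x ∈ S) ∧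
        ∀ x y, bookAdj (t + 3) (n + 1) x y → c x ≠ sigmaL (t + 3) (n + 1) 1 x y * c y} : ℤ) =
      #S * gammaP (t + 3) #S ^ n * gammaP (t + 4) #S := by
  have hpages : ∀ a ∈ S, (Nat.card (Σ b : S.erase a, ∀ i : Fin (n + 1),
      pathColorings S t ((if i.val < 1 then -1 else 1) * a) b) : ℤ) =
        gammaP (t + 3) #S ^ n * gammaP (t + 4) #S := by
    intro a ha
    rw [Nat.card_sigma_pi (S.erase a) fun b (i : Fin (n + 1)) =>
      pathColorings S t ((if i.val < 1 then -1 else 1) * a) b]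
    push_cast
    have ha0 : a ≠ 0 := fun h => h0 (h ▸ ha)
    rw [← sum_card_pathColorings_erase ha (hneg a ha) (by omega), mul_sum]
    refine sum_congr rfl fun b hb => ?_
    simp [Fin.prod_univ_succ, mul_comm,
      card_pathColorings_of_ne ha (mem_of_mem_erase hb) (ne_of_mem_erase hb).symm]
  rw [Nat.card_congr (bookColoringEquiv S), Nat.card_sigma]
  push_cast
  simp only [hpages, coe_mem, sum_const, card_univ, Fintype.card_coe, nsmul_eq_mul]
  ring

theorem statement15_general (m n : ℕ) (hm : 3 ≤ m) (hn : 1 ≤ n) (k : ℕ) :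
    (Nat.card {c : BookVertex m n → ℤ //
        (∀ x, c x ≠ 0 ∧ |c x| ≤ (k : ℤ)) ∧
        ∀ x y, bookAdj m n x y → c x ≠ sigmaL m n 1 x y * c y} : ℤ) =
      (2 * (k : ℤ)) * gammaP m (2 * (k : ℤ)) ^ (n - 1) * gammaP (m + 1) (2 * (k : ℤ)) := by
  obtain ⟨t, rfl⟩ : ∃ t, m = t + 3 := ⟨m - 3, by omega⟩
  obtain ⟨n, rfl⟩ : ∃ n', n = n' + 1 := ⟨n - 1, by omega⟩
  have hcolors (c : BookVertex (t + 3) (n + 1) → ℤ) :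
      (∀ x, c x ≠ 0 ∧ |c x| ≤ (k : ℤ)) ↔ ∀ x, c x ∈ signedColors k := by
    simp only [mem_signedColors]
  rw [Nat.card_congr (Equiv.subtypeEquivRight fun c => and_congr_left' (hcolors c)),
    card_bookColorings_sigmaL_one _ (by simp [signedColors])
      (fun x hx => by simpa [mem_signedColors] using hx), card_signedColors]
  push_cast
  rfl

/-- With `λ = 2k`, the number of zero-free proper colorings of `(B(m,n), σ_1)` with
color set `{-k, …, -1, 1, …, k}` is `λ·γ_m(λ)^{n-1}·γ_{m+1}(λ)`. -/
theorem statement15 (m n : ℕ) (hm : 3 ≤ m) (hn : 1 ≤ n) (k : ℕ) (hk : 1 ≤ k) :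
    (Nat.card {c : BookVertex m n → ℤ //
        (∀ x, c x ≠ 0 ∧ |c x| ≤ (k : ℤ)) ∧
        ∀ x y, bookAdj m n x y → c x ≠ sigmaL m n 1 x y * c y} : ℤ) =
      (2 * (k : ℤ)) * gammaP m (2 * (k : ℤ)) ^ (n - 1) * gammaP (m + 1) (2 * (k : ℤ)) :=
  statement15_general m n hm hn k
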